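/- For indices i ∈ {1,…,D} and j ∈ {1,…,R}, the real function f(t) = ℓ evaluated with the entry V_{ij} of V replaced by t (keeping all other entries of A, V, μ fixed) is twice differentiable at t = V_{ij} and its second derivative equals Σ_{ii} − Σ_{ii}·(vᵀ·Σ·v) − ((Σ·v)_i)² − r_i², where v ∈ ℝ^D is the j-th column of V, Σ = Ω⁻¹ and r = y − μ. -/

import Mathlib

open Matrix

/-- Multivariate Gaussian log-likelihood in the low-rank precision parametrization
`Ω = A + V·Vᵀ` with `A = diagonal a`:
`ℓ = -(D/2)·log(2π) + (1/2)·log(det Ω) - (1/2)·(y-μ)ᵀ Ω (y-μ)`. -/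
noncomputable def gaussLRLL (D R : ℕ) (y μ : Fin D → ℝ) (a : Fin D → ℝ)
    (V : Matrix (Fin D) (Fin R) ℝ) : ℝ :=
  -((D : ℝ) / 2) * Real.log (2 * Real.pi)
    + (1 / 2) * Real.log (Matrix.diagonal a + V * V.transpose).det
    - (1 / 2) * ((y - μ) ⬝ᵥ (Matrix.diagonal a + V * V.transpose).mulVec (y - μ))

/-- The matrix `V` with its `(i,j)`-entry replaced by `t`. -/
def updEntryV {D R : ℕ} (V : Matrix (Fin D) (Fin R) ℝ) (i : Fin D) (j : Fin R) (t : ℝ) :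
    Matrix (Fin D) (Fin R) ℝ :=
  Matrix.of fun k l => if k = i ∧ l = j then t else V k l

/-!
Changing `V i j` to `t` changes only the `j`-th column `v` of `V`, into `w = v + (t - V i j) eᵢ`,
so `Ω(t) = Ω + w wᵀ - v vᵀ` is a rank-two update of `Ω`. The matrix determinant lemma turns
`det Ω(t)` into `det Ω · p(t - V i j)` for the quadratic `p(x) = 1 + 2 (Σv)ᵢ x + γ x²` with
`γ = Σᵢᵢ - Σᵢᵢ vᵀΣv + (Σv)ᵢ²`, and `rᵀ Ω(t) r` is a quadratic in `t - V i j` with leading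
coefficient `rᵢ²`. The second derivative of `½ log p - ½ rᵢ² x²` at `x = 0` is
`½ (p''(0) - p'(0)²) - rᵢ² = γ - 2 (Σv)ᵢ² - rᵢ²`.
-/

section
variable {m K : Type*} [Fintype m] [CommRing K]

theorem Matrix.of_mul_mul_transpose_of_apply {l n : Type*} (A : l → m → K) (S : Matrix m m K)
    (B : n → m → K) (p : l) (q : n) : (of A * S * (of B)ᵀ) p q = A p ⬝ᵥ S *ᵥ B q := by
  rw [dotProduct_mulVec, mul_apply_eq_vecMul, mul_apply_eq_vecMul]
  rfl

theorem Matrix.dotProduct_vecMulVec_mulVec (r u z : m → K) :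
    r ⬝ᵥ vecMulVec u z *ᵥ r = (r ⬝ᵥ u) * (z ⬝ᵥ r) := by
  rw [dotProduct_mulVec, vecMul_vecMulVec, smul_dotProduct, smul_eq_mul]

variable [DecidableEq m]

theorem Matrix.det_add_vecMulVec_sub_vecMulVec {Ω : Matrix m m K} (hΩ : IsUnit Ω.det)
    (w v : m → K) :
    (Ω + vecMulVec w w - vecMulVec v v).det = Ω.det *
      ((1 + w ⬝ᵥ Ω⁻¹ *ᵥ w) * (1 - v ⬝ᵥ Ω⁻¹ *ᵥ v) + (w ⬝ᵥ Ω⁻¹ *ᵥ v) * (v ⬝ᵥ Ω⁻¹ *ᵥ w)) := by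
  have hUW : vecMulVec w w - vecMulVec v v = (of ![w, v])ᵀ * of ![w, -v] := by
    ext k l
    simp only [sub_apply, vecMulVec_apply, mul_apply, transpose_apply, of_apply, Pi.neg_apply,
      Fin.sum_univ_two, cons_val_zero, cons_val_one]
    ring
  rw [add_sub_assoc, hUW, det_add_mul _ _ hΩ, det_fin_two]
  simp only [add_apply, one_apply_eq, one_apply_ne zero_ne_one, one_apply_ne one_ne_zero,
    of_mul_mul_transpose_of_apply, cons_val_zero, cons_val_one, neg_dotProduct]
  ring

theorem Matrix.add_single_dotProduct_mulVec (S : Matrix m m K) (u v : m → K) (i : m) (x : K) :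
    (u + Pi.single i x) ⬝ᵥ S *ᵥ v = u ⬝ᵥ S *ᵥ v + x * (S *ᵥ v) i := by
  rw [add_dotProduct, single_dotProduct]

theorem Matrix.dotProduct_mulVec_add_single (S : Matrix m m K) (u v : m → K) (i : m) (y : K) :
    u ⬝ᵥ S *ᵥ (v + Pi.single i y) = u ⬝ᵥ S *ᵥ v + y * (u ᵥ* S) i := by
  rw [mulVec_add, dotProduct_add, dotProduct_mulVec u S (Pi.single i y), dotProduct_single,
    mul_comm]

theorem Matrix.det_add_vecMulVec_add_single_sub_vecMulVec {Ω : Matrix m m K} (hΩ : IsUnit Ω.det)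
    (hΩs : Ω.IsSymm) (v : m → K) (i : m) (x : K) :
    (Ω + vecMulVec (v + Pi.single i x) (v + Pi.single i x) - vecMulVec v v).det =
      Ω.det * (1 + 2 * (Ω⁻¹ *ᵥ v) i * x
        + (Ω⁻¹ i i - Ω⁻¹ i i * (v ⬝ᵥ Ω⁻¹ *ᵥ v) + (Ω⁻¹ *ᵥ v) i ^ 2) * x ^ 2) := by
  have hvecMul (u : m → K) : u ᵥ* Ω⁻¹ = Ω⁻¹ *ᵥ u := by rw [← mulVec_transpose, hΩs.inv]
  have hsingle : (Ω⁻¹ *ᵥ Pi.single i x) i = Ω⁻¹ i i * x := dotProduct_single _ _ _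
  rw [det_add_vecMulVec_sub_vecMulVec hΩ]
  simp only [dotProduct_mulVec_add_single]
  simp only [add_single_dotProduct_mulVec, hvecMul, mulVec_add, Pi.add_apply, hsingle]
  ring

theorem Matrix.dotProduct_add_vecMulVec_add_single_sub_vecMulVec_mulVec (Ω : Matrix m m K)
    (r v : m → K) (i : m) (x : K) :
    r ⬝ᵥ (Ω + vecMulVec (v + Pi.single i x) (v + Pi.single i x) - vecMulVec v v) *ᵥ r =
      r ⬝ᵥ Ω *ᵥ r + 2 * (v ⬝ᵥ r) * r i * x + r i ^ 2 * x ^ 2 := by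
  rw [sub_mulVec, add_mulVec, dotProduct_sub, dotProduct_add, dotProduct_vecMulVec_mulVec,
    dotProduct_vecMulVec_mulVec, dotProduct_add, add_dotProduct, dotProduct_single,
    single_dotProduct, dotProduct_comm r v]
  ring

end

theorem Function.update_eq_add_single {m R : Type*} [DecidableEq m] [AddCommGroup R] (f : m → R)
    (i : m) (b : R) : Function.update f i b = f + Pi.single i (b - f i) := by
  ext k
  by_cases hk : k = i
  · subst hk; simp
  · simp [hk]

theorem Matrix.updateCol_mul_transpose_updateCol {m n K : Type*} [Fintype n] [DecidableEq n]
    [CommRing K] (M : Matrix m n K) (j : n) (c : m → K) :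
    M.updateCol j c * (M.updateCol j c)ᵀ =
      M * Mᵀ + vecMulVec c c - vecMulVec (fun k => M k j) (fun k => M k j) := by
  ext k l
  have hrest : ∀ x ∈ Finset.univ.erase j,
      M.updateCol j c k x * M.updateCol j c l x = M k x * M l x := fun x hx => by
    simp [Finset.ne_of_mem_erase hx]
  simp only [mul_apply, transpose_apply, add_apply, sub_apply, vecMulVec_apply]
  rw [← Finset.add_sum_erase _ _ (Finset.mem_univ j),
    ← Finset.add_sum_erase _ _ (Finset.mem_univ j), Finset.sum_congr rfl hrest]
  simp only [updateCol_self]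
  ring

theorem Matrix.posDef_diagonal_add_mul_transpose {m n : Type*} [Fintype m] [DecidableEq m]
    [Fintype n] {a : m → ℝ} (ha : ∀ k, 0 < a k) (V : Matrix m n ℝ) :
    (diagonal a + V * Vᵀ).PosDef :=
  (posDef_diagonal_iff.mpr ha).add_posSemidef (by
    simpa [conjTranspose_eq_transpose_of_trivial] using posSemidef_self_mul_conjTranspose V)

theorem updEntryV_eq_updateCol {D R : ℕ} (V : Matrix (Fin D) (Fin R) ℝ) (i : Fin D) (j : Fin R)
    (t : ℝ) : updEntryV V i j t = V.updateCol j (Function.update (fun k => V k j) i t) := by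
  ext k l
  by_cases hl : l = j
  · subst hl; by_cases hk : k = i <;> simp [updEntryV, hk]
  · simp [updEntryV, hl]

theorem diagonal_add_updEntryV_mul_transpose {D R : ℕ} (a : Fin D → ℝ)
    (V : Matrix (Fin D) (Fin R) ℝ) (i : Fin D) (j : Fin R) (t : ℝ) :
    diagonal a + updEntryV V i j t * (updEntryV V i j t)ᵀ =
      diagonal a + V * Vᵀ + vecMulVec ((fun k => V k j) + Pi.single i (t - V i j))
        ((fun k => V k j) + Pi.single i (t - V i j))
        - vecMulVec (fun k => V k j) (fun k => V k j) := by
  rw [updEntryV_eq_updateCol, updateCol_mul_transpose_updateCol, Function.update_eq_add_single]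
  abel

theorem hasDerivAt_quadratic (c b e s t : ℝ) :
    HasDerivAt (fun t => c + b * (t - s) + e * (t - s) ^ 2) (b + 2 * e * (t - s)) t := by
  have hx := (hasDerivAt_id t).sub_const s
  refine (((hx.const_mul b).const_add c).add ((hx.pow 2).const_mul e)).congr_deriv ?_
  simp only [id]
  ring

theorem hasDerivAt_affine (c b s t : ℝ) : HasDerivAt (fun t => c + b * (t - s)) b t := by
  simpa using (((hasDerivAt_id t).sub_const s).const_mul b).const_add c

theorem hasDerivAt_deriv_of_log_quadratic_sub_quadratic {f : ℝ → ℝ} {c d α γ q b e s : ℝ}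
    (hf : ∀ t, f t = c + 1 / 2 * Real.log (d * (1 + 2 * α * (t - s) + γ * (t - s) ^ 2))
      - 1 / 2 * (q + b * (t - s) + e * (t - s) ^ 2))
    (hP : ∀ t, d * (1 + 2 * α * (t - s) + γ * (t - s) ^ 2) ≠ 0) :
    (∀ t, DifferentiableAt ℝ f t) ∧ HasDerivAt (deriv f) (γ - 2 * α ^ 2 - e) s := by
  set f' : ℝ → ℝ := fun t => 1 / 2 * (d * (2 * α + 2 * γ * (t - s))
      / (d * (1 + 2 * α * (t - s) + γ * (t - s) ^ 2))) - 1 / 2 * (b + 2 * e * (t - s))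
  have hP' t := (hasDerivAt_quadratic 1 (2 * α) γ s t).const_mul d
  have hf' : ∀ t, HasDerivAt f (f' t) t := fun t => by
    rw [show f = _ from funext hf]
    exact (((hP' t).log (hP t)).const_mul _).const_add c |>.sub
      ((hasDerivAt_quadratic q b e s t).const_mul _)
  have hf'' : HasDerivAt f' (γ - 2 * α ^ 2 - e) s := by
    have hd : d ≠ 0 := by simpa using hP s
    refine ((((hasDerivAt_affine (2 * α) (2 * γ) s s).const_mul d).div (hP' s) (hP s)).const_mul
      (1 / 2 : ℝ) |>.sub ((hasDerivAt_affine b (2 * e) s s).const_mul (1 / 2 : ℝ))).congr_deriv ?_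
    field_simp
    ring
  exact ⟨fun t => (hf' t).differentiableAt,
    hf''.congr_of_eventuallyEq (.of_forall fun t => (hf' t).deriv)⟩

section
variable {D R : ℕ} {a : Fin D → ℝ} (ha : ∀ k, 0 < a k) (V : Matrix (Fin D) (Fin R) ℝ)
  (i : Fin D) (j : Fin R) (t : ℝ)
include ha

theorem det_diagonal_add_updEntryV_mul_transpose :
    (diagonal a + updEntryV V i j t * (updEntryV V i j t)ᵀ).det =
      (diagonal a + V * Vᵀ).det *
        (1 + 2 * ((diagonal a + V * Vᵀ)⁻¹ *ᵥ fun k => V k j) i * (t - V i j)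
          + ((diagonal a + V * Vᵀ)⁻¹ i i - (diagonal a + V * Vᵀ)⁻¹ i i *
              ((fun k => V k j) ⬝ᵥ (diagonal a + V * Vᵀ)⁻¹ *ᵥ fun k => V k j)
            + ((diagonal a + V * Vᵀ)⁻¹ *ᵥ fun k => V k j) i ^ 2) * (t - V i j) ^ 2) := by
  have hΩ := posDef_diagonal_add_mul_transpose ha V
  rw [diagonal_add_updEntryV_mul_transpose, det_add_vecMulVec_add_single_sub_vecMulVec
    hΩ.det_pos.ne'.isUnit (isHermitian_iff_isSymm.mp hΩ.isHermitian)]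

theorem gaussLRLL_updEntryV (y μ : Fin D → ℝ) :
    gaussLRLL D R y μ a (updEntryV V i j t) =
      -((D : ℝ) / 2) * Real.log (2 * Real.pi)
        + 1 / 2 * Real.log ((diagonal a + V * Vᵀ).det *
          (1 + 2 * ((diagonal a + V * Vᵀ)⁻¹ *ᵥ fun k => V k j) i * (t - V i j)
            + ((diagonal a + V * Vᵀ)⁻¹ i i - (diagonal a + V * Vᵀ)⁻¹ i i *
                ((fun k => V k j) ⬝ᵥ (diagonal a + V * Vᵀ)⁻¹ *ᵥ fun k => V k j)
              + ((diagonal a + V * Vᵀ)⁻¹ *ᵥ fun k => V k j) i ^ 2) * (t - V i j) ^ 2))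
        - 1 / 2 * ((y - μ) ⬝ᵥ (diagonal a + V * Vᵀ) *ᵥ (y - μ)
          + 2 * ((fun k => V k j) ⬝ᵥ (y - μ)) * (y - μ) i * (t - V i j)
          + (y - μ) i ^ 2 * (t - V i j) ^ 2) := by
  rw [gaussLRLL, det_diagonal_add_updEntryV_mul_transpose ha, diagonal_add_updEntryV_mul_transpose,
    dotProduct_add_vecMulVec_add_single_sub_vecMulVec_mulVec]

end

theorem gaussLR_deriv2_V_general (D R : ℕ) (y μ : Fin D → ℝ)
    (a : Fin D → ℝ) (ha : ∀ k, 0 < a k)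
    (V : Matrix (Fin D) (Fin R) ℝ) (i : Fin D) (j : Fin R) :
    (∀ᶠ t in nhds (V i j),
        DifferentiableAt ℝ (fun t : ℝ => gaussLRLL D R y μ a (updEntryV V i j t)) t) ∧
      HasDerivAt (deriv (fun t : ℝ => gaussLRLL D R y μ a (updEntryV V i j t)))
        (((Matrix.diagonal a + V * V.transpose)⁻¹) i i
          - ((Matrix.diagonal a + V * V.transpose)⁻¹) i i *
              ((fun k => V k j) ⬝ᵥ
                (Matrix.diagonal a + V * V.transpose)⁻¹.mulVec (fun k => V k j))
          - ((Matrix.diagonal a + V * V.transpose)⁻¹.mulVec (fun k => V k j) i) ^ 2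
          - (y i - μ i) ^ 2)
        (V i j) := by
  have hdet_ne (t : ℝ) := (posDef_diagonal_add_mul_transpose ha (updEntryV V i j t)).det_pos.ne'
  simp only [det_diagonal_add_updEntryV_mul_transpose ha] at hdet_ne
  obtain ⟨hdiff, hderiv⟩ := hasDerivAt_deriv_of_log_quadratic_sub_quadratic
    (gaussLRLL_updEntryV ha V i j · y μ) hdet_ne
  refine ⟨.of_forall hdiff, hderiv.congr_deriv ?_⟩
  rw [Pi.sub_apply]
  ring

/-- Second partial derivative of the low-rank Gaussian log-likelihood with respect to the
entry `V_{ij}`: the map `t ↦ ℓ(V(t))` is twice differentiable at `t = V i j` and its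
second derivative equals `Σ_{ii} - Σ_{ii}·(vᵀ Σ v) - ((Σ v)_i)² - r_i²`, where `v` is the
`j`-th column of `V`, `Σ = Ω⁻¹` and `r = y - μ`. -/
theorem gaussLR_deriv2_V (D R : ℕ) (hD : 1 ≤ D) (y μ : Fin D → ℝ)
    (a : Fin D → ℝ) (ha : ∀ k, 0 < a k)
    (V : Matrix (Fin D) (Fin R) ℝ) (i : Fin D) (j : Fin R) :
    (∀ᶠ t in nhds (V i j),
        DifferentiableAt ℝ (fun t : ℝ => gaussLRLL D R y μ a (updEntryV V i j t)) t) ∧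
      HasDerivAt (deriv (fun t : ℝ => gaussLRLL D R y μ a (updEntryV V i j t)))
        (((Matrix.diagonal a + V * V.transpose)⁻¹) i i
          - ((Matrix.diagonal a + V * V.transpose)⁻¹) i i *
              ((fun k => V k j) ⬝ᵥ
                (Matrix.diagonal a + V * V.transpose)⁻¹.mulVec (fun k => V k j))
          - ((Matrix.diagonal a + V * V.transpose)⁻¹.mulVec (fun k => V k j) i) ^ 2
          - (y i - μ i) ^ 2)
        (V i j) :=
  gaussLR_deriv2_V_general D R y μ a ha V i j
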